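/- Let I ⊆ {1,…,m} be written as I = I'' ⊔ I' where every element of I'' is smaller than every element of I'. Let x ∈ A_d be homogeneous of odd degree d, let y be homogeneous, and let 𝒜 be a set of ordered pairs of subsets of I'. Then Σ (−1)^{θ(A',B')+|B'|} c(I'', [c(A',x), c(B',y)]) = Σ (−1)^{θ(A,B)+|B|} [c(A,x), c(B,y)], where the left sum runs over ordered partitions I' = A' ⊔ B' with (A',B') ∈ 𝒜, and the right sum runs over ordered partitions I = A ⊔ B with (A ∩ I', B ∩ I') ∈ 𝒜. -/

import Mathlib

universe u

section GradedCommutators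

variable {R : Type u} [Ring R] {m : ℕ}

/-- The sign `(−1)^z` as an element of the ring `R`, for `z : ℤ`. -/
def sgn (R : Type u) [Ring R] (z : ℤ) : R := (((-1 : Rˣ) ^ z : Rˣ) : R)

/-- The graded commutator `[a,b] = a·b − (−1)^{pq}·b·a` of elements `a`, `b` of degrees
`p`, `q`. -/
def gbrk (p q : ℤ) (a b : R) : R := a * b - sgn R (p * q) * (b * a)

/-- The iterated commutator `[u_{i₁},[u_{i₂},…,[u_{i_k},x]…]]` along a list `i₁,…,i_k`,
where the `u_i` have degree `1` and `x` has degree `d`. -/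
def cList (u : Fin m → R) (d : ℤ) (x : R) : List (Fin m) → R
  | [] => x
  | i :: l => gbrk 1 (d + l.length) (u i) (cList u d x l)

/-- `c(I,x) = [u_{i₁},[u_{i₂},…,[u_{i_k},x]…]]` for `I = {i₁ < … < i_k}`,
where `x` has degree `d`. -/
def cNest (u : Fin m → R) (d : ℤ) (x : R) (I : Finset (Fin m)) : R :=
  cList u d x (I.sort (· ≤ ·))

/-- `û_I = u_{i₁} ⋯ u_{i_k}` for `I = {i₁ < … < i_k}`. -/
def uHat (u : Fin m → R) (I : Finset (Fin m)) : R :=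
  ((I.sort (· ≤ ·)).map u).prod

/-- The Koszul sign exponent `θ(A,B) = #{(a,b) ∈ A × B | a > b}`. -/
def theta (A B : Finset (Fin m)) : ℕ :=
  ((A ×ˢ B).filter fun p => p.2 < p.1).card

end GradedCommutators

section Aux
variable {R : Type u} [Ring R] {m : ℕ}

lemma sgn_add (a b : ℤ) : sgn R (a + b) = sgn R a * sgn R b := by
  simp [sgn, zpow_add]

lemma sgn_even {z : ℤ} (h : Even z) : sgn R z = 1 := by
  obtain ⟨c, rfl⟩ := h
  rw [← two_mul]
  simp [sgn, zpow_mul]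

lemma sgn_odd {z : ℤ} (h : Odd z) : sgn R z = -1 := by
  obtain ⟨c, rfl⟩ := h
  simp [sgn, zpow_add, zpow_mul]

lemma sgn_zero : sgn R 0 = 1 := sgn_even (Even.zero)

lemma sgn_congr {a b : ℤ} (h : a % 2 = b % 2) : sgn R a = sgn R b := by
  have he : Even (a - b) := by
    rw [Int.even_sub, Int.even_iff, Int.even_iff]; omega
  have : a = b + (a - b) := by ring
  rw [this, sgn_add, sgn_even he, mul_one]

lemma sgn_comm (z : ℤ) (r : R) : sgn R z * r = r * sgn R z := by
  rcases Int.even_or_odd z with h | h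
  · rw [sgn_even h, one_mul, mul_one]
  · rw [sgn_odd h, neg_one_mul, mul_neg_one]

end Aux
section Leib
variable {R : Type u} [Ring R] {m : ℕ}

lemma leibniz (p q : ℤ) (U a b : R) :
    gbrk 1 (p + q) U (gbrk p q a b)
      = gbrk (1 + p) q (gbrk 1 p U a) b + sgn R p * gbrk p (1 + q) a (gbrk 1 q U b) := by
  have e1 : (1 : ℤ) * (p + q) = p + q := one_mul _
  have e2 : (1 + p) * q = q + p * q := by ring
  have e3 : p * (1 + q) = p + p * q := by ring
  have e4 : (1 : ℤ) * p = p := one_mul _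
  have e5 : (1 : ℤ) * q = q := one_mul _
  simp only [gbrk, e1, e2, e3, e4, e5, sgn_add]
  rcases Int.even_or_odd p with hp | hp <;> rcases Int.even_or_odd q with hq | hq <;>
    rcases Int.even_or_odd (p * q) with hpq | hpq <;>
      simp only [sgn_even, sgn_odd, hp, hq, hpq] <;> noncomm_ring
end Leib
section CListLemmas
variable {R : Type u} [Ring R] {m : ℕ}

lemma cList_append (u : Fin m → R) (d : ℤ) (x : R) (L1 L2 : List (Fin m)) :
    cList u d x (L1 ++ L2) = cList u (d + L2.length) (cList u d x L2) L1 := by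
  induction L1 with
  | nil => simp [cList]
  | cons i l ih =>
      simp only [List.cons_append, cList, List.append_eq, ih]
      have h2 : (d + ((l ++ L2).length : ℕ) : ℤ) = d + (L2.length : ℕ) + (l.length : ℕ) := by
        rw [List.length_append]; push_cast; ring
      rw [h2]

lemma sort_union (S T : Finset (Fin m)) (h : ∀ a ∈ S, ∀ b ∈ T, a < b) :
    (S ∪ T).sort (· ≤ ·) = S.sort (· ≤ ·) ++ T.sort (· ≤ ·) := by
  have hdisj : Disjoint S T := by
    rw [Finset.disjoint_left]
    intro a haS haT
    exact absurd (h a haS a haT) (lt_irrefl a)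
  refine List.Perm.eq_of_pairwise' (r := (· ≤ ·)) (Finset.pairwise_sort _ _) ?_ ?_
  · rw [List.pairwise_append]
    refine ⟨Finset.pairwise_sort _ _, Finset.pairwise_sort _ _, ?_⟩
    intro a ha b hb
    exact (h a (by simpa using (Finset.mem_sort (α := Fin m) (· ≤ ·)).1 ha)
      b (by simpa using (Finset.mem_sort (α := Fin m) (· ≤ ·)).1 hb)).le
  · rw [← Multiset.coe_eq_coe]
    push_cast [Finset.sort_eq]
    rw [← Finset.disjUnion_eq_union S T hdisj]
    rw [show ((Finset.sort S (· ≤ ·) ++ Finset.sort T (· ≤ ·) : List (Fin m)) : Multiset (Fin m))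
        = (Finset.sort S (· ≤ ·) : Multiset (Fin m)) + (Finset.sort T (· ≤ ·) : Multiset (Fin m))
      from rfl]
    simp [Finset.disjUnion, Finset.sort_eq]

lemma cNest_insert_min (u : Fin m → R) (d : ℤ) (x : R) {i : Fin m} {S : Finset (Fin m)}
    (hi : ∀ b ∈ S, i < b) (hiS : i ∉ S) :
    cNest u d x (insert i S) = gbrk 1 (d + S.card) (u i) (cNest u d x S) := by
  unfold cNest
  rw [Finset.sort_insert (· ≤ ·) (fun b hb => (hi b hb).le) hiS]
  simp [cList, Finset.length_sort]

lemma cNest_union (u : Fin m → R) (d : ℤ) (x : R) (S T : Finset (Fin m))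
    (h : ∀ a ∈ T, ∀ b ∈ S, a < b) :
    cNest u d x (T ∪ S) = cNest u (d + S.card) (cNest u d x S) T := by
  unfold cNest
  rw [sort_union T S h, cList_append, Finset.length_sort]

end CListLemmas
section ThetaLemmas
variable {m : ℕ}

lemma theta_eq_sum (A B : Finset (Fin m)) :
    theta A B = ∑ a ∈ A, (B.filter (· < a)).card := by
  rw [theta, Finset.card_filter, Finset.sum_product]
  exact Finset.sum_congr rfl fun a _ => (Finset.card_filter _ _).symm

lemma theta_insert_left {i : Fin m} {A B : Finset (Fin m)}
    (h : ∀ b ∈ B, i < b) (hiA : i ∉ A) : theta (insert i A) B = theta A B := by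
  rw [theta_eq_sum, theta_eq_sum, Finset.sum_insert hiA]
  have : B.filter (· < i) = ∅ :=
    Finset.filter_eq_empty_iff.2 fun b hb => not_lt.2 (h b hb).le
  simp [this]

lemma theta_insert_right {i : Fin m} {A B : Finset (Fin m)}
    (h : ∀ a ∈ A, i < a) (hiB : i ∉ B) : theta A (insert i B) = theta A B + A.card := by
  rw [theta_eq_sum, theta_eq_sum]
  have key : ∀ a ∈ A, ((insert i B).filter (· < a)).card = (B.filter (· < a)).card + 1 := by
    intro a ha
    rw [Finset.filter_insert, if_pos (h a ha),
      Finset.card_insert_of_notMem (fun hmem => hiB (Finset.mem_of_mem_filter _ hmem))]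
  rw [Finset.sum_congr rfl key, Finset.sum_add_distrib, Finset.sum_const, smul_eq_mul, mul_one]

lemma theta_union_left {A A' : Finset (Fin m)} (B : Finset (Fin m)) (h : Disjoint A A') :
    theta (A ∪ A') B = theta A B + theta A' B := by
  rw [theta_eq_sum, theta_eq_sum, theta_eq_sum, Finset.sum_union h]

lemma theta_union_right (A : Finset (Fin m)) {B B' : Finset (Fin m)} (h : Disjoint B B') :
    theta A (B ∪ B') = theta A B + theta A B' := by
  rw [theta_eq_sum, theta_eq_sum, theta_eq_sum, ← Finset.sum_add_distrib]
  refine Finset.sum_congr rfl fun a _ => ?_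
  rw [Finset.filter_union, Finset.card_union_of_disjoint
    (Finset.disjoint_filter_filter h)]

lemma theta_eq_zero {A B : Finset (Fin m)} (h : ∀ a ∈ A, ∀ b ∈ B, a < b) :
    theta A B = 0 := by
  rw [theta_eq_sum]
  refine Finset.sum_eq_zero fun a ha => ?_
  rw [Finset.card_eq_zero, Finset.filter_eq_empty_iff]
  exact fun b hb => not_lt.2 (h a ha b hb).le

lemma theta_eq_mul {A B : Finset (Fin m)} (h : ∀ a ∈ A, ∀ b ∈ B, b < a) :
    theta A B = A.card * B.card := by
  rw [theta_eq_sum]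
  rw [Finset.sum_congr rfl (fun a ha => by
    rw [Finset.filter_eq_self.2 (fun b hb => h a ha b hb)])]
  simp [mul_comm]

end ThetaLemmas
section KeyLemma
variable {R : Type u} [Ring R] {m : ℕ}

lemma gbrk_sum {ι : Type*} (p q : ℤ) (a : R) (s : Finset ι) (f : ι → R) :
    gbrk p q a (∑ t ∈ s, f t) = ∑ t ∈ s, gbrk p q a (f t) := by
  simp [gbrk, Finset.mul_sum, Finset.sum_mul, Finset.sum_sub_distrib]

lemma gbrk_sgn_mul (p q z : ℤ) (a x : R) :
    gbrk p q a (sgn R z * x) = sgn R z * gbrk p q a x := by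
  simp only [gbrk, mul_sub]
  congr 1
  · rw [← mul_assoc, ← sgn_comm z a, mul_assoc]
  · rw [mul_assoc (sgn R z), ← mul_assoc (sgn R (p*q)), ← sgn_comm z, mul_assoc]

lemma key (u : Fin m → R) (S : Finset (Fin m)) (p q : ℤ) (a b : R) :
    cNest u (p + q) (gbrk p q a b) S
      = ∑ T ∈ S.powerset,
          sgn R ((theta T (S \ T) : ℤ) + ((S \ T).card : ℤ) * p)
            * gbrk (p + (T.card : ℤ)) (q + ((S \ T).card : ℤ))
                (cNest u p a T) (cNest u q b (S \ T)) := by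
  induction S using Finset.induction_on_min with
  | empty => simp [cNest, cList, theta, sgn_zero]
  | insert i S hi ih =>
    have hiS : i ∉ S := fun h => lt_irrefl i (hi i h)
    rw [cNest_insert_min u _ _ hi hiS, ih, gbrk_sum, Finset.sum_powerset_insert hiS]
    have main : ∀ T ∈ S.powerset,
        gbrk 1 (p + q + (S.card : ℤ)) (u i)
          (sgn R ((theta T (S \ T) : ℤ) + ((S \ T).card : ℤ) * p)
            * gbrk (p + (T.card : ℤ)) (q + ((S \ T).card : ℤ))
                (cNest u p a T) (cNest u q b (S \ T)))
        = (sgn R ((theta T (insert i S \ T) : ℤ) + ((insert i S \ T).card : ℤ) * p)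
            * gbrk (p + (T.card : ℤ)) (q + ((insert i S \ T).card : ℤ))
                (cNest u p a T) (cNest u q b (insert i S \ T)))
          + (sgn R ((theta (insert i T) (insert i S \ insert i T) : ℤ)
                + ((insert i S \ insert i T).card : ℤ) * p)
            * gbrk (p + ((insert i T).card : ℤ)) (q + ((insert i S \ insert i T).card : ℤ))
                (cNest u p a (insert i T)) (cNest u q b (insert i S \ insert i T))) := by
      intro T hT
      rw [Finset.mem_powerset] at hT
      have hiT : i ∉ T := fun h => hiS (hT h)
      have hiSD : i ∉ S \ T := fun h => hiS (Finset.mem_sdiff.1 h).1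
      have hltT : ∀ b ∈ T, i < b := fun b hb => hi b (hT hb)
      have hltSD : ∀ b ∈ S \ T, i < b := fun b hb => hi b (Finset.mem_sdiff.1 hb).1
      have hsd1 : insert i S \ T = insert i (S \ T) := by
        ext a; simp only [Finset.mem_sdiff, Finset.mem_insert]
        constructor
        · rintro ⟨rfl | ha, hna⟩
          · exact Or.inl rfl
          · exact Or.inr ⟨ha, hna⟩
        · rintro (rfl | ⟨ha, hna⟩)
          · exact ⟨Or.inl rfl, hiT⟩
          · exact ⟨Or.inr ha, hna⟩
      have hsd2 : insert i S \ insert i T = S \ T := by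
        ext a; simp only [Finset.mem_sdiff, Finset.mem_insert]
        constructor
        · rintro ⟨rfl | ha, hna⟩
          · exact absurd (Or.inl rfl) hna
          · exact ⟨ha, fun h => hna (Or.inr h)⟩
        · rintro ⟨ha, hna⟩
          exact ⟨Or.inr ha, fun h => h.elim (fun h' => hiS (h' ▸ ha)) hna⟩
      have hcard : (S \ T).card + T.card = S.card := Finset.card_sdiff_add_card_eq_card hT
      have hdeg : p + q + (S.card : ℤ) = (p + (T.card : ℤ)) + (q + ((S \ T).card : ℤ)) := by
        push_cast [← hcard]; ring
      rw [gbrk_sgn_mul, hdeg, leibniz]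
      rw [mul_add]
      rw [hsd1, hsd2]
      rw [theta_insert_left hltSD hiT, theta_insert_right hltT hiSD,
        cNest_insert_min u p a hltT hiT, cNest_insert_min u q b hltSD hiSD,
        Finset.card_insert_of_notMem hiT, Finset.card_insert_of_notMem hiSD]
      refine (add_comm _ _).trans (congrArg₂ (· + ·) ?_ ?_)
      · have hq2 : q + (((S \ T).card + 1 : ℕ) : ℤ) = 1 + (q + ((S \ T).card : ℤ)) := by
          push_cast; ring
        rw [hq2, ← mul_assoc, ← sgn_add]
        congr 2
        push_cast; ring
      · have hp2 : p + ((T.card + 1 : ℕ) : ℤ) = 1 + (p + (T.card : ℤ)) := by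
          push_cast; ring
        rw [hp2]
    rw [Finset.sum_congr rfl main, Finset.sum_add_distrib]

end KeyLemma


/-- Let `I = I'' ⊔ I'` with every element of `I''` smaller than every
element of `I'`, let `x` be homogeneous of odd degree `d`, `y` homogeneous of degree `e`,
and let `F` be a set of ordered pairs of subsets of `I'`.  Then
`Σ (−1)^{θ(A',B')+|B'|} c(I'',[c(A',x),c(B',y)]) = Σ (−1)^{θ(A,B)+|B|} [c(A,x),c(B,y)]`,
where the left sum runs over ordered partitions `I' = A' ⊔ B'` with `(A',B') ∈ F`, and the
right one over ordered partitions `I = A ⊔ B` with `(A ∩ I', B ∩ I') ∈ F`. -/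
theorem cNest_regrouping {k R : Type u} [CommRing k] [Ring R] [Algebra k R] {m : ℕ}
    (𝒜 : ℤ → Submodule k R) [GradedAlgebra 𝒜]
    (u : Fin m → R) (hu : ∀ i, u i ∈ 𝒜 1)
    (I I'' I' : Finset (Fin m)) (hdisj : Disjoint I'' I') (hunion : I = I'' ∪ I')
    (hlt : ∀ a ∈ I'', ∀ b ∈ I', a < b)
    (d e : ℤ) (hodd : Odd d) (x y : R) (hx : x ∈ 𝒜 d) (hy : y ∈ 𝒜 e)
    (F : Finset (Fin m) × Finset (Fin m) → Prop) [DecidablePred F]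
    (hF : ∀ p, F p → p.1 ⊆ I' ∧ p.2 ⊆ I') :
    ∑ A' ∈ I'.powerset.filter (fun A' => F (A', I' \ A')),
        sgn R ((theta A' (I' \ A') : ℤ) + ((I' \ A').card : ℤ))
          * cNest u (d + e + (I'.card : ℤ))
              (gbrk (d + (A'.card : ℤ)) (e + ((I' \ A').card : ℤ))
                (cNest u d x A') (cNest u e y (I' \ A'))) I''
      = ∑ A ∈ I.powerset.filter (fun A => F (A ∩ I', (I \ A) ∩ I')),
          sgn R ((theta A (I \ A) : ℤ) + ((I \ A).card : ℤ))
            * gbrk (d + (A.card : ℤ)) (e + ((I \ A).card : ℤ))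
                (cNest u d x A) (cNest u e y (I \ A)) := by
  classical
  obtain ⟨t, ht⟩ := hodd
  have hd' : ∀ a, a ∈ I'' → a ∈ I' → False := fun a h h' => Finset.disjoint_left.1 hdisj h h'
  -- step 1 : expand each LHS term with the key lemma
  have step1 : ∀ A' ∈ I'.powerset.filter (fun A' => F (A', I' \ A')),
      sgn R ((theta A' (I' \ A') : ℤ) + ((I' \ A').card : ℤ))
          * cNest u (d + e + (I'.card : ℤ))
              (gbrk (d + (A'.card : ℤ)) (e + ((I' \ A').card : ℤ))
                (cNest u d x A') (cNest u e y (I' \ A'))) I''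
        = ∑ T ∈ I''.powerset,
            sgn R ((theta A' (I' \ A') : ℤ) + ((I' \ A').card : ℤ))
              * (sgn R ((theta T (I'' \ T) : ℤ) + ((I'' \ T).card : ℤ) * (d + (A'.card : ℤ)))
                * gbrk ((d + (A'.card : ℤ)) + (T.card : ℤ))
                    ((e + ((I' \ A').card : ℤ)) + ((I'' \ T).card : ℤ))
                    (cNest u (d + (A'.card : ℤ)) (cNest u d x A') T)
                    (cNest u (e + ((I' \ A').card : ℤ)) (cNest u e y (I' \ A')) (I'' \ T))) := by
    intro A' hA'
    rw [Finset.mem_filter, Finset.mem_powerset] at hA'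
    have hcard : (I' \ A').card + A'.card = I'.card :=
      Finset.card_sdiff_add_card_eq_card hA'.1
    have hdeg : d + e + (I'.card : ℤ)
        = (d + (A'.card : ℤ)) + (e + ((I' \ A').card : ℤ)) := by
      push_cast [← hcard]; ring
    rw [hdeg, key, Finset.mul_sum]
  rw [Finset.sum_congr rfl step1, ← Finset.sum_product']
  -- step 2 : reindex
  refine Finset.sum_nbij' (fun pr => pr.2 ∪ pr.1) (fun A => (A ∩ I', A ∩ I'')) ?_ ?_ ?_ ?_ ?_
  · rintro ⟨A', T⟩ hpr
    rw [Finset.mem_product, Finset.mem_filter, Finset.mem_powerset, Finset.mem_powerset] at hpr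
    obtain ⟨⟨hA', hFA⟩, hT⟩ := hpr
    rw [Finset.mem_filter, Finset.mem_powerset]
    have hsubI : T ∪ A' ⊆ I := by
      rw [hunion]; exact Finset.union_subset_union hT hA'
    have hint1 : (T ∪ A') ∩ I' = A' := by
      ext a
      have h2 : a ∈ T → a ∈ I'' := @hT a
      have h3 : a ∈ A' → a ∈ I' := @hA' a
      simp only [Finset.mem_inter, Finset.mem_union]
      have := hd' a
      tauto
    have hint2 : (I \ (T ∪ A')) ∩ I' = I' \ A' := by
      ext a
      have h2 : a ∈ T → a ∈ I'' := @hT a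
      have h3 : a ∈ A' → a ∈ I' := @hA' a
      simp only [Finset.mem_inter, Finset.mem_sdiff, Finset.mem_union, hunion]
      have := hd' a
      tauto
    exact ⟨hsubI, by rw [hint1, hint2]; exact hFA⟩
  · intro A hA
    rw [Finset.mem_filter, Finset.mem_powerset] at hA
    obtain ⟨hAI, hFA⟩ := hA
    rw [Finset.mem_product, Finset.mem_filter, Finset.mem_powerset, Finset.mem_powerset]
    have hint3 : (I \ A) ∩ I' = I' \ (A ∩ I') := by
      ext a
      have h2 : a ∈ A → a ∈ I := @hAI a
      simp only [Finset.mem_inter, Finset.mem_sdiff, hunion, Finset.mem_union]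
      have := hd' a
      tauto
    exact ⟨⟨Finset.inter_subset_right, by rw [← hint3]; exact hFA⟩, Finset.inter_subset_right⟩
  · rintro ⟨A', T⟩ hpr
    rw [Finset.mem_product, Finset.mem_filter, Finset.mem_powerset, Finset.mem_powerset] at hpr
    obtain ⟨⟨hA', hFA⟩, hT⟩ := hpr
    have hint1 : (T ∪ A') ∩ I' = A' := by
      ext a
      have h2 : a ∈ T → a ∈ I'' := @hT a
      have h3 : a ∈ A' → a ∈ I' := @hA' a
      simp only [Finset.mem_inter, Finset.mem_union]
      have := hd' a
      tauto
    have hint4 : (T ∪ A') ∩ I'' = T := by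
      ext a
      have h2 : a ∈ T → a ∈ I'' := @hT a
      have h3 : a ∈ A' → a ∈ I' := @hA' a
      simp only [Finset.mem_inter, Finset.mem_union]
      have := hd' a
      tauto
    simp only [hint1, hint4]
  · intro A hA
    rw [Finset.mem_filter, Finset.mem_powerset] at hA
    have h2 : ∀ a, a ∈ A → a ∈ I := fun a ha => hA.1 ha
    ext a
    simp only [Finset.mem_union, Finset.mem_inter]
    have := hd' a
    have := h2 a
    simp only [hunion, Finset.mem_union] at this
    tauto
  · rintro ⟨A', T⟩ hpr
    rw [Finset.mem_product, Finset.mem_filter, Finset.mem_powerset, Finset.mem_powerset] at hpr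
    obtain ⟨⟨hA', hFA⟩, hT⟩ := hpr
    have hTA : Disjoint T A' := hdisj.mono hT hA'
    have hBdisj : Disjoint (I'' \ T) (I' \ A') :=
      hdisj.mono Finset.sdiff_subset Finset.sdiff_subset
    have hBT : I \ (T ∪ A') = (I'' \ T) ∪ (I' \ A') := by
      ext a
      have h2 : a ∈ T → a ∈ I'' := @hT a
      have h3 : a ∈ A' → a ∈ I' := @hA' a
      simp only [Finset.mem_sdiff, Finset.mem_union, hunion]
      have := hd' a
      tauto
    have hlt1 : ∀ a ∈ T, ∀ b ∈ A', a < b := fun a ha b hb => hlt a (hT ha) b (hA' hb)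
    have hlt2 : ∀ a ∈ I'' \ T, ∀ b ∈ I' \ A', a < b := fun a ha b hb =>
      hlt a (Finset.mem_sdiff.1 ha).1 b (Finset.mem_sdiff.1 hb).1
    have hltz : ∀ a ∈ T, ∀ b ∈ I' \ A', a < b := fun a ha b hb =>
      hlt a (hT ha) b (Finset.mem_sdiff.1 hb).1
    have hltm : ∀ a ∈ A', ∀ b ∈ I'' \ T, b < a := fun a ha b hb =>
      hlt b (Finset.mem_sdiff.1 hb).1 a (hA' ha)
    simp only
    rw [hBT, cNest_union u d x A' T hlt1, cNest_union u e y (I' \ A') (I'' \ T) hlt2,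
      Finset.card_union_of_disjoint hTA, Finset.card_union_of_disjoint hBdisj,
      theta_union_left _ hTA, theta_union_right _ hBdisj, theta_union_right _ hBdisj,
      theta_eq_zero hltz, theta_eq_mul hltm]
    rw [show (d + ((T.card + A'.card : ℕ) : ℤ)) = (d + (A'.card : ℤ)) + (T.card : ℤ) by
        push_cast; ring,
      show (e + (((I'' \ T).card + (I' \ A').card : ℕ) : ℤ))
          = (e + ((I' \ A').card : ℤ)) + ((I'' \ T).card : ℤ) by push_cast; ring]
    rw [← mul_assoc, ← sgn_add]
    congr 1
    apply sgn_congr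
    push_cast [ht]
    rw [show ((theta A' (I' \ A') : ℤ) + ((I' \ A').card : ℤ)
          + ((theta T (I'' \ T) : ℤ) + ((I'' \ T).card : ℤ) * (2 * t + 1 + (A'.card : ℤ))))
        = ((theta T (I'' \ T) : ℤ) + 0
            + ((A'.card : ℤ) * ((I'' \ T).card : ℤ) + (theta A' (I' \ A') : ℤ))
            + (((I'' \ T).card : ℤ) + ((I' \ A').card : ℤ)))
          + 2 * (((I'' \ T).card : ℤ) * t) by ring,
      Int.add_mul_emod_self_left]
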